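/- arXiv:0905.4251 — 2 statements merged into one kernel-verified Lean document; each statement's English description precedes it below -/
import Mathlib

section
/- In the category Rel of sets and relations, the triple (T, δ, d), where T is the finite-multiset functor, d_A = {([α],α) : α ∈ A}, and δ_A = {(a₁+…+a_n, [a₁,…,a_n]) : n ∈ ℕ, a₁,…,a_n ∈ T(A)}, is a comonad. -/
/-- Arrows of the category `Rel`. -/
def Rel' (A B : Type) : Type := A → B → Prop

/-- Relational composition (`f` then `g`). -/
def Rel'.comp {A B C : Type} (f : Rel' A B) (g : Rel' B C) : Rel' A C :=
  fun a c => ∃ b, f a b ∧ g b c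

/-- Identity relation. -/
def Rel'.id (A : Type) : Rel' A A := fun a b => a = b

/-- Action of the finite multiset functor `T` on relations:
`T(f) = {([α₁,…,α_n],[β₁,…,β_n]) | (α_i,β_i) ∈ f}`. -/
def Tmap {A B : Type} (f : Rel' A B) : Rel' (Multiset A) (Multiset B) :=
  fun m m' => ∃ l : List (A × B), (∀ p ∈ l, f p.1 p.2) ∧
    m = ↑(l.map Prod.fst) ∧ m' = ↑(l.map Prod.snd)

/-- Counit `d_A = {([α],α)}`. -/
def dRel (A : Type) : Rel' (Multiset A) A := fun m α => m = {α}

/-- Comultiplication `δ_A = {(a₁+…+a_n, [a₁,…,a_n])}`. -/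
def δRel (A : Type) : Rel' (Multiset A) (Multiset (Multiset A)) :=
  fun m ms => m = ms.sum

def TmapM {A B : Type} (f : Rel' A B) : Rel' (Multiset A) (Multiset B) :=
  fun m m' => ∃ r : Multiset (A × B), (∀ p ∈ r, f p.1 p.2) ∧
    m = r.map Prod.fst ∧ m' = r.map Prod.snd

lemma Tmap_eq_TmapM {A B : Type} (f : Rel' A B) : Tmap f = TmapM f := by
  funext m m'
  apply propext
  constructor
  · rintro ⟨l, h, rfl, rfl⟩
    exact ⟨↑l, fun p hp => h p (by simpa using hp), by simp [Multiset.map_coe],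
      by simp [Multiset.map_coe]⟩
  · rintro ⟨r, h, rfl, rfl⟩
    refine ⟨r.toList, fun p hp => h p (by simpa [Multiset.mem_toList] using hp), ?_, ?_⟩ <;>
      simp [← Multiset.map_coe, Multiset.coe_toList]

/-- split a multiset along a decomposition of its image -/
lemma split_map {P B : Type} (g : P → B) :
    ∀ (s1 : Multiset B) (r : Multiset P) (s2 : Multiset B), r.map g = s1 + s2 →
      ∃ r1 r2, r = r1 + r2 ∧ r1.map g = s1 ∧ r2.map g = s2 := by
  classical
  intro s1
  induction s1 using Multiset.induction with
  | empty => intro r s2 h; exact ⟨0, r, by simp, by simp, by simpa using h⟩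
  | cons b s1 ih =>
    intro r s2 h
    have hb : b ∈ r.map g := by rw [h]; simp
    obtain ⟨p, hp, hpb⟩ := Multiset.mem_map.mp hb
    have hr : r = p ::ₘ r.erase p := (Multiset.cons_erase hp).symm
    have h2 : (r.erase p).map g = s1 + s2 := by
      have := h
      rw [hr, Multiset.map_cons, hpb, Multiset.cons_add] at this
      exact (Multiset.cons_inj_right _).mp this
    obtain ⟨r1, r2, hre, h1, h2'⟩ := ih (r.erase p) s2 h2
    exact ⟨p ::ₘ r1, r2, by rw [hr, hre, Multiset.cons_add], by simp [h1, hpb], h2'⟩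

/-- align two multisets of pairs whose middle columns agree -/
lemma align {A B C : Type} (f : Rel' A B) (g : Rel' B C) :
    ∀ (r1 : Multiset (A × B)) (r2 : Multiset (B × C)),
      r1.map Prod.snd = r2.map Prod.fst →
      (∀ p ∈ r1, f p.1 p.2) → (∀ p ∈ r2, g p.1 p.2) →
      ∃ r : Multiset (A × C), (∀ p ∈ r, (f.comp g) p.1 p.2) ∧
        r.map Prod.fst = r1.map Prod.fst ∧ r.map Prod.snd = r2.map Prod.snd := by
  classical
  intro r1
  induction r1 using Multiset.induction with
  | empty =>
    intro r2 h _ _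
    have h0 : r2.map Prod.fst = 0 := by simpa using h.symm
    have : r2 = 0 := Multiset.map_eq_zero.mp h0
    exact ⟨0, by simp, by simp, by simp [this]⟩
  | cons p r1 ih =>
    intro r2 h hf hg
    have hb : p.2 ∈ r2.map Prod.fst := by rw [← h]; simp
    obtain ⟨q, hq, hqb⟩ := Multiset.mem_map.mp hb
    have hr2 : r2 = q ::ₘ r2.erase q := (Multiset.cons_erase hq).symm
    have h2 : r1.map Prod.snd = (r2.erase q).map Prod.fst := by
      have := h
      rw [hr2, Multiset.map_cons, Multiset.map_cons, hqb] at this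
      exact (Multiset.cons_inj_right _).mp this
    obtain ⟨r, hr, hfst, hsnd⟩ := ih (r2.erase q) h2
      (fun x hx => hf x (Multiset.mem_cons_of_mem hx))
      (fun x hx => hg x (hr2 ▸ Multiset.mem_cons_of_mem hx))
    refine ⟨(p.1, q.2) ::ₘ r, ?_, by simp [hfst], by rw [hr2]; simp [hsnd]⟩
    intro x hx
    rcases Multiset.mem_cons.mp hx with h' | h'
    · subst h'
      exact ⟨p.2, hf p (Multiset.mem_cons_self _ _), hqb ▸ hg q (hr2 ▸ Multiset.mem_cons_self _ _)⟩
    · exact hr x h'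

lemma sum_sum {A : Type} (s : Multiset (Multiset (Multiset A))) :
    (s.map Multiset.sum).sum = s.sum.sum := by
  induction s using Multiset.induction with
  | empty => simp
  | cons a s ih => simp [ih]

lemma TmapM_zero {A B : Type} (f : Rel' A B) : TmapM f 0 0 :=
  ⟨0, by simp, by simp, by simp⟩

lemma TmapM_cons {A B : Type} (f : Rel' A B) {a b m m'} (hab : f a b)
    (h : TmapM f m m') : TmapM f (a ::ₘ m) (b ::ₘ m') := by
  obtain ⟨r, hr, rfl, rfl⟩ := h
  refine ⟨(a, b) ::ₘ r, ?_, by simp, by simp⟩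
  intro p hp
  rcases Multiset.mem_cons.mp hp with h' | h'
  · subst h'; exact hab
  · exact hr p h'

lemma TmapM_sum {A B : Type} (f : Rel' A B) :
    ∀ (r : Multiset (Multiset A × Multiset B)), (∀ p ∈ r, TmapM f p.1 p.2) →
      TmapM f (r.map Prod.fst).sum (r.map Prod.snd).sum := by
  intro r
  induction r using Multiset.induction with
  | empty => intro _; simpa using TmapM_zero f
  | cons p r ih =>
    intro h
    obtain ⟨rp, hrp, h1, h2⟩ := h p (Multiset.mem_cons_self _ _)
    have hrest := ih (fun q hq => h q (Multiset.mem_cons_of_mem hq))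
    obtain ⟨rr, hrr, h3, h4⟩ := hrest
    refine ⟨rp + rr, ?_, ?_, ?_⟩
    · intro q hq
      rcases Multiset.mem_add.mp hq with h' | h'
      · exact hrp q h'
      · exact hrr q h'
    · simp [h1, h3, Multiset.sum_cons]
    · simp [h2, h4, Multiset.sum_cons]

lemma delta_nat {A B : Type} (f : Rel' A B) :
    ∀ (ms' : Multiset (Multiset B)) (r : Multiset (A × B)),
      (∀ p ∈ r, f p.1 p.2) → r.map Prod.snd = ms'.sum →
      ∃ ms : Multiset (Multiset A), r.map Prod.fst = ms.sum ∧ TmapM (TmapM f) ms ms' := by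
  intro ms'
  induction ms' using Multiset.induction with
  | empty =>
    intro r _ h
    have h0 : r.map Prod.snd = 0 := by simpa using h
    have : r = 0 := Multiset.map_eq_zero.mp h0
    subst this
    exact ⟨0, by simp, TmapM_zero _⟩
  | cons b ms' ih =>
    intro r hf h
    rw [Multiset.sum_cons] at h
    obtain ⟨r1, r2, rfl, hr1, hr2⟩ := split_map Prod.snd b r ms'.sum h
    obtain ⟨ms, hsum, htm⟩ := ih r2 (fun p hp => hf p (Multiset.mem_add.mpr (Or.inr hp))) hr2
    refine ⟨(r1.map Prod.fst) ::ₘ ms, ?_, ?_⟩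
    · simp [Multiset.sum_cons, hsum]
    · exact TmapM_cons _ ⟨r1, fun p hp => hf p (Multiset.mem_add.mpr (Or.inl hp)), rfl, hr1.symm⟩ htm

/-- `(T, δ, d)` is a comonad on `Rel`: `T` is a functor, `d` and `δ`
are natural, and the comonad laws hold. -/
theorem stmt5 (A B C : Type) :
    (Tmap (Rel'.id A) = Rel'.id (Multiset A)) ∧
    (∀ (f : Rel' A B) (g : Rel' B C), Tmap (f.comp g) = (Tmap f).comp (Tmap g)) ∧
    (∀ f : Rel' A B, (Tmap f).comp (dRel B) = (dRel A).comp f) ∧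
    (∀ f : Rel' A B, (Tmap f).comp (δRel B) = (δRel A).comp (Tmap (Tmap f))) ∧
    ((δRel A).comp (dRel (Multiset A)) = Rel'.id (Multiset A)) ∧
    ((δRel A).comp (Tmap (dRel A)) = Rel'.id (Multiset A)) ∧
    ((δRel A).comp (δRel (Multiset A)) = (δRel A).comp (Tmap (δRel A))) := by
  refine ⟨?_, ?_, ?_, ?_, ?_, ?_, ?_⟩
  · -- Tmap id = id
    rw [Tmap_eq_TmapM]
    funext m m'
    apply propext
    constructor
    · rintro ⟨r, h, rfl, rfl⟩
      exact Multiset.map_congr rfl (fun p hp => h p hp)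
    · rintro (rfl : m = m')
      exact ⟨m.map (fun a => (a, a)), fun p hp => by
        obtain ⟨a, _, rfl⟩ := Multiset.mem_map.mp hp; rfl,
        by simp [Multiset.map_map], by simp [Multiset.map_map]⟩
  · -- functoriality
    intro f g
    simp only [Tmap_eq_TmapM]
    funext m m''
    apply propext
    constructor
    · rintro ⟨r, h, rfl, rfl⟩
      induction r using Multiset.induction with
      | empty => exact ⟨0, by simpa using TmapM_zero f, by simpa using TmapM_zero g⟩
      | cons p r ih =>
        obtain ⟨m', h1, h2⟩ := ih (fun q hq => h q (Multiset.mem_cons_of_mem hq))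
        obtain ⟨b, hfb, hgb⟩ := h p (Multiset.mem_cons_self _ _)
        exact ⟨b ::ₘ m', by simpa using TmapM_cons f hfb h1, by simpa using TmapM_cons g hgb h2⟩
    · rintro ⟨m', ⟨r1, h1, rfl, rfl⟩, ⟨r2, h2, hmid, rfl⟩⟩
      obtain ⟨r, hr, hfst, hsnd⟩ := align f g r1 r2 hmid h1 h2
      exact ⟨r, hr, hfst.symm, hsnd.symm⟩
  · -- naturality of d
    intro f
    simp only [Tmap_eq_TmapM]
    funext m α
    apply propext
    constructor
    · rintro ⟨m', ⟨r, h, rfl, rfl⟩, (hα : r.map Prod.snd = {α})⟩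
      obtain ⟨p, rfl, hp2⟩ := Multiset.map_eq_singleton.mp hα
      exact ⟨p.1, by simp [dRel], hp2 ▸ h p (by simp)⟩
    · rintro ⟨a, (rfl : m = {a}), hfa⟩
      exact ⟨{α}, ⟨{(a, α)}, fun p hp => by simp at hp; subst hp; exact hfa,
        by simp, by simp⟩, rfl⟩
  · -- naturality of δ
    intro f
    simp only [Tmap_eq_TmapM]
    funext m ms'
    apply propext
    constructor
    · rintro ⟨m', ⟨r, h, rfl, rfl⟩, (hsum : r.map Prod.snd = ms'.sum)⟩
      obtain ⟨ms, hms, htm⟩ := delta_nat f ms' r h hsum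
      exact ⟨ms, hms, htm⟩
    · rintro ⟨ms, (rfl : m = ms.sum), ⟨r, h, rfl, rfl⟩⟩
      exact ⟨(r.map Prod.snd).sum, TmapM_sum f r h, rfl⟩
  · -- δ then d
    funext m m'
    apply propext
    constructor
    · rintro ⟨ms, (rfl : m = ms.sum), (rfl : ms = {m'})⟩
      simp [Rel'.id]
    · rintro (rfl : m = m')
      exact ⟨{m}, by simp [δRel], rfl⟩
  · -- δ then T d
    simp only [Tmap_eq_TmapM]
    funext m m'
    apply propext
    constructor
    · rintro ⟨ms, (rfl : m = ms.sum), ⟨r, h, rfl, rfl⟩⟩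
      show (r.map Prod.fst).sum = r.map Prod.snd
      have : r.map Prod.fst = (r.map Prod.snd).map (fun a => ({a} : Multiset A)) := by
        rw [Multiset.map_map]
        exact Multiset.map_congr rfl (fun p hp => h p hp)
      rw [this, Multiset.sum_map_singleton]
    · rintro (rfl : m = m')
      refine ⟨m.map (fun a => ({a} : Multiset A)), by simp [δRel, Multiset.sum_map_singleton],
        ⟨m.map (fun a => (({a} : Multiset A), a)), ?_, by simp [Multiset.map_map], by simp [Multiset.map_map]⟩⟩
      intro p hp
      obtain ⟨a, _, rfl⟩ := Multiset.mem_map.mp hp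
      rfl
  · -- coassociativity
    simp only [Tmap_eq_TmapM]
    funext m mmss
    apply propext
    constructor
    · rintro ⟨ms, (rfl : m = ms.sum), (rfl : ms = mmss.sum)⟩
      refine ⟨mmss.map Multiset.sum, (sum_sum mmss).symm,
        ⟨mmss.map (fun x => (x.sum, x)), ?_, by simp [Multiset.map_map], by simp [Multiset.map_map]⟩⟩
      intro p hp
      obtain ⟨x, _, rfl⟩ := Multiset.mem_map.mp hp
      rfl
    · rintro ⟨ms, (rfl : m = ms.sum), ⟨r, h, rfl, rfl⟩⟩
      refine ⟨(r.map Prod.snd).sum, ?_, rfl⟩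
      show (r.map Prod.fst).sum = ((r.map Prod.snd).sum).sum
      have : r.map Prod.fst = (r.map Prod.snd).map Multiset.sum := by
        rw [Multiset.map_map]
        exact Multiset.map_congr rfl (fun p hp => h p hp)
      rw [this, sum_sum]
end

section
/- In the category with objects nonempty sets and arrows A → B the relations from M_fin(A) to B (Kleisli category of the finite-multiset comonad on Rel), a nonempty set A does not have enough points: there exist arrows y ≠ z : A → A such that y ∘ x = z ∘ x for every arrow x from the terminal object to A. -/
/-- Kleisli composition (`f : A → B` then `g : B → C`). -/
def kcomp {A B C : Type} (f : Rel' (Multiset A) B) (g : Rel' (Multiset B) C) :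
    Rel' (Multiset A) C :=
  (δRel A).comp ((Tmap f).comp g)

/-! Since `Multiset Empty` is a singleton, Kleisli precomposition with a point `x` only asks
whether some multiset of elements related to `0` by `x` is sent to `c`. Hence `{([α], α)}` and
`{([α, α], α)}` both compose with `x` to `{(0, α)}` if `x 0 α`, and to the empty relation
otherwise. -/

open Multiset

theorem tmap_iff_of_unique {X B : Type} [Unique X] (f : Rel' X B) (m : Multiset X)
    (S : Multiset B) : Tmap f m S ↔ card m = card S ∧ ∀ b ∈ S, f default b := by
  constructor
  · rintro ⟨l, hl, rfl, rfl⟩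
    refine ⟨by simp, fun b hb => ?_⟩
    obtain ⟨p, hp, rfl⟩ := List.mem_map.mp (mem_coe.mp hb)
    simpa only [Unique.eq_default p.1] using hl p hp
  · rintro ⟨hcard, hS⟩
    refine ⟨S.toList.map fun b => (default, b), ?_, ?_, by simp⟩
    · simpa using hS
    · have hm : m = replicate (card m) default :=
        eq_replicate.mpr ⟨rfl, fun a _ => Unique.eq_default a⟩
      simpa [hcard, ← coe_replicate] using hm

theorem kcomp_point_iff {A C : Type} (x : Rel' (Multiset Empty) A)
    (y : Rel' (Multiset A) C) (m : Multiset Empty) (c : C) :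
    kcomp x y m c ↔ ∃ S : Multiset A, (∀ a ∈ S, x 0 a) ∧ y S c := by
  constructor
  · rintro ⟨ms, -, S, hxS, hyS⟩
    exact ⟨S, ((tmap_iff_of_unique x ms S).mp hxS).2, hyS⟩
  · rintro ⟨S, hxS, hyS⟩
    refine ⟨replicate (card S) 0, ?_, S, (tmap_iff_of_unique x _ S).mpr ⟨by simp, hxS⟩, hyS⟩
    exact Subsingleton.elim _ _

/-- a nonempty set `A` does not have enough points in the Kleisli
category: there are `y ≠ z : A → A` with `y ∘ x = z ∘ x` for every point
`x : 1 → A` (the terminal object being the empty set). -/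
theorem stmt8 (A : Type) [Nonempty A] :
    ∃ y z : Rel' (Multiset A) A, y ≠ z ∧
      ∀ x : Rel' (Multiset Empty) A, kcomp x y = kcomp x z := by
  obtain ⟨α⟩ := ‹Nonempty A›
  refine ⟨fun S a => S = {α} ∧ a = α, fun S a => S = {α, α} ∧ a = α, fun h => ?_, fun x => ?_⟩
  · have h1 : ({α} : Multiset A) = {α, α} := ((congrFun₂ h {α} α).mp ⟨rfl, rfl⟩).1
    simpa using congrArg card h1
  · funext m c
    refine propext ((kcomp_point_iff x _ m c).trans (Iff.trans ?_ (kcomp_point_iff x _ m c).symm))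
    simp
end
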